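/- Let < be a monomial preorder and <* the product of < with another monomial preorder <'. Then for every subset G ⊆ k[X]_<, the leading ideal satisfies L_{<*}(G) ⊆ L_{<'}(L_<(G)), and for every ideal I ⊆ k[X]_<, equality holds: L_{<*}(I) = L_{<'}(L_<(I)). -/

import Mathlib

open MvPolynomial

structure MonomialPreorder (n : ℕ) where
  lt : (Fin n →₀ ℕ) → (Fin n →₀ ℕ) → Prop
  irrefl : ∀ a, ¬ lt a a
  trans : ∀ {a b c}, lt a b → lt b c → lt a c
  weak : ∀ {a b c}, (¬ lt a b ∧ ¬ lt b a) → (¬ lt b c ∧ ¬ lt c b) → ¬ lt a c ∧ ¬ lt c a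
  compat : ∀ {a b} (c), lt a b → lt (a + c) (b + c)
  cancel : ∀ {a b} (c), lt (a + c) (b + c) → lt a b

variable {n : ℕ} {k : Type*} [Field k]

open Classical in
noncomputable def leadingPart (P : MonomialPreorder n) (f : MvPolynomial (Fin n) k) :
    MvPolynomial (Fin n) k :=
  ∑ a ∈ f.support.filter (fun a => ∀ b ∈ f.support, ¬ P.lt a b),
    monomial a (coeff a f)

noncomputable def Sles (k : Type*) [Field k] (P : MonomialPreorder n) : Submonoid (MvPolynomial (Fin n) k) :=
  Submonoid.closure {u | leadingPart P u = 1}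

abbrev Loc (k : Type*) [Field k] (P : MonomialPreorder n) := Localization (Sles k P)

noncomputable def leadingIdealWrt (P Q : MonomialPreorder n) (G : Set (Loc k P)) :
    Ideal (MvPolynomial (Fin n) k) :=
  Ideal.span {q | ∃ f ∈ G, ∃ u p : MvPolynomial (Fin n) k, leadingPart P u = 1 ∧
    algebraMap (MvPolynomial (Fin n) k) (Loc k P) p = algebraMap (MvPolynomial (Fin n) k) (Loc k P) u * f ∧
    q = leadingPart Q p}

noncomputable def leadingIdeal (P : MonomialPreorder n) (G : Set (Loc k P)) :
    Ideal (MvPolynomial (Fin n) k) := leadingIdealWrt P P G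

noncomputable def leadingIdealPoly (P : MonomialPreorder n) (Q : Set (MvPolynomial (Fin n) k)) :
    Ideal (MvPolynomial (Fin n) k) :=
  Ideal.span (leadingPart P '' Q)

namespace MonomialPreorder

variable {n : ℕ} (P : MonomialPreorder n)

def sim (a b : Fin n →₀ ℕ) : Prop := ¬ P.lt a b ∧ ¬ P.lt b a

theorem sim_refl (a) : P.sim a a := ⟨P.irrefl a, P.irrefl a⟩

theorem sim_symm {a b} (h : P.sim a b) : P.sim b a := ⟨h.2, h.1⟩

theorem sim_trans {a b c} (h : P.sim a b) (h' : P.sim b c) : P.sim a c := P.weak h h'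

theorem lt_of_lt_of_sim {a b c} (h : P.lt a b) (h' : P.sim b c) : P.lt a c := by
  by_contra hac
  rcases Classical.em (P.lt c a) with hca | hca
  · exact h'.2 (P.trans hca h)
  · exact (P.sim_trans ⟨hac, hca⟩ (P.sim_symm h')).1 h

theorem lt_of_sim_of_lt {a b c} (h : P.sim a b) (h' : P.lt b c) : P.lt a c := by
  by_contra hac
  rcases Classical.em (P.lt c a) with hca | hca
  · exact h.2 (P.trans h' hca)
  · exact (P.sim_trans (P.sim_symm h) ⟨hac, hca⟩).1 h'

theorem sim_add {a b} (c) (h : P.sim a b) : P.sim (a + c) (b + c) :=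
  ⟨fun hl => h.1 (P.cancel c hl), fun hl => h.2 (P.cancel c hl)⟩

theorem sim_cancel {a b} (c) (h : P.sim (a + c) (b + c)) : P.sim a b :=
  ⟨fun hl => h.1 (P.compat c hl), fun hl => h.2 (P.compat c hl)⟩

/-- `a` is maximal in the finite set `s`. -/
def maxIn (s : Finset (Fin n →₀ ℕ)) (a : Fin n →₀ ℕ) : Prop := ∀ b ∈ s, ¬ P.lt a b

theorem sim_of_maxIn {s a b} (ha : P.maxIn s a) (hb : P.maxIn s b)
    (ha' : a ∈ s) (hb' : b ∈ s) : P.sim a b := ⟨ha b hb', hb a ha'⟩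

theorem exists_max_above : ∀ N (s : Finset (Fin n →₀ ℕ)), s.card ≤ N → ∀ a ∈ s, ¬ P.maxIn s a →
    ∃ m ∈ s, P.maxIn s m ∧ P.lt a m := by
  intro N
  induction N with
  | zero => intro s hs a ha; simp [Finset.card_eq_zero.mp (Nat.le_zero.mp hs)] at ha
  | succ N ih =>
    intro s hs a ha hmax
    have : ∃ b ∈ s, P.lt a b := by
      by_contra h; push_neg at h; exact hmax h
    obtain ⟨b, hb, hab⟩ := this
    have hba : ¬ P.lt b a := fun h => P.irrefl a (P.trans hab h)
    have hbs' : b ∈ s.erase a := Finset.mem_erase.mpr ⟨fun h => P.irrefl a (h ▸ hab), hb⟩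
    rcases Classical.em (P.maxIn (s.erase a) b) with hbmax | hbmax
    · refine ⟨b, hb, ?_, hab⟩
      intro c hc
      rcases Classical.em (c = a) with rfl | hne
      · exact hba
      · exact hbmax c (Finset.mem_erase.mpr ⟨hne, hc⟩)
    · have hcard : (s.erase a).card ≤ N := by
        have := Finset.card_erase_of_mem (by assumption : a ∈ s)
        omega
      obtain ⟨m, hm, hmmax, hbm⟩ := ih (s.erase a) hcard b hbs' hbmax
      have ham : P.lt a m := P.trans hab hbm
      refine ⟨m, Finset.mem_of_mem_erase hm, ?_, ham⟩
      intro c hc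
      rcases Classical.em (c = a) with rfl | hne
      · exact fun h => P.irrefl c (P.trans ham h)
      · exact hmmax c (Finset.mem_erase.mpr ⟨hne, hc⟩)

theorem lt_max_of_not_max {s : Finset (Fin n →₀ ℕ)} {a m : Fin n →₀ ℕ}
    (ha : a ∈ s) (hnm : ¬ P.maxIn s a) (hm : P.maxIn s m) (hm' : m ∈ s) : P.lt a m := by
  obtain ⟨m', hm's, hm'max, ham'⟩ := P.exists_max_above s.card s le_rfl a ha hnm
  exact P.lt_of_lt_of_sim ham' (P.sim_of_maxIn hm'max hm hm's hm')

end MonomialPreorder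

section PolyAux
attribute [local instance] Classical.propDecidable

open Classical in
/-- Restriction of a polynomial to the monomials satisfying a predicate. -/
noncomputable def restr {n : ℕ} {k : Type*} [Field k] (f : MvPolynomial (Fin n) k)
    (p : (Fin n →₀ ℕ) → Prop) : MvPolynomial (Fin n) k :=
  ∑ a ∈ f.support.filter (fun a => p a), monomial a (coeff a f)

variable {n : ℕ} {k : Type*} [Field k]

open Classical in
theorem coeff_restr (f : MvPolynomial (Fin n) k) (p : (Fin n →₀ ℕ) → Prop)
    (b : Fin n →₀ ℕ) : coeff b (restr f p) = if p b then coeff b f else 0 := by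
  classical
  rw [restr, coeff_sum]
  rw [Finset.sum_congr rfl (fun a _ => coeff_monomial b a (coeff a f))]
  rcases Classical.em (b ∈ f.support.filter (fun a => p a)) with hb | hb
  · rw [Finset.sum_eq_single_of_mem b hb (fun c _ hcb => if_neg hcb), if_pos rfl,
      if_pos (Finset.mem_filter.mp hb).2]
  · rw [Finset.sum_eq_zero, eq_comm]
    · rw [Finset.mem_filter, not_and_or] at hb
      rcases hb with hb | hb
      · rw [MvPolynomial.notMem_support_iff] at hb
        rw [hb, ite_self]
      · exact if_neg hb
    · intro c hc
      rcases Classical.em (c = b) with rfl | hcb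
      · exact absurd hc hb
      · exact if_neg hcb

theorem mem_support_restr {f : MvPolynomial (Fin n) k} {p : (Fin n →₀ ℕ) → Prop}
    {b : Fin n →₀ ℕ} : b ∈ (restr f p).support ↔ p b ∧ b ∈ f.support := by
  classical
  simp only [MvPolynomial.mem_support_iff, coeff_restr]
  split_ifs with h <;> simp [h]

theorem restr_add (f g : MvPolynomial (Fin n) k) (p : (Fin n →₀ ℕ) → Prop) :
    restr (f + g) p = restr f p + restr g p := by
  ext b
  simp only [coeff_restr, coeff_add]
  split_ifs <;> simp

theorem restr_congr {f : MvPolynomial (Fin n) k} {p q : (Fin n →₀ ℕ) → Prop}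
    (h : ∀ b ∈ f.support, (p b ↔ q b)) : restr f p = restr f q := by
  ext b
  simp only [coeff_restr]
  rcases Classical.em (b ∈ f.support) with hb | hb
  · rw [if_congr (h b hb) rfl rfl]
  · rw [MvPolynomial.notMem_support_iff] at hb
    rw [hb]; simp

theorem restr_zero_of_not (f : MvPolynomial (Fin n) k) (p : (Fin n →₀ ℕ) → Prop)
    (h : ∀ b ∈ f.support, ¬ p b) : restr f p = 0 := by
  ext b
  simp only [coeff_restr, coeff_zero]
  rcases Classical.em (p b) with hb | hb
  · rw [if_pos hb]
    by_contra hc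
    exact h b (MvPolynomial.mem_support_iff.mpr hc) hb
  · rw [if_neg hb]

theorem leadingPart_eq_restr (P : MonomialPreorder n) (f : MvPolynomial (Fin n) k) :
    leadingPart P f = restr f (fun a => P.maxIn f.support a) := by
  classical
  rw [leadingPart, restr]
  congr 1
  exact Finset.filter_congr (fun x _ => by rfl)

theorem coeff_leadingPart (P : MonomialPreorder n) (f : MvPolynomial (Fin n) k)
    (b : Fin n →₀ ℕ) :
    coeff b (leadingPart P f) = if P.maxIn f.support b then coeff b f else 0 := by
  rw [leadingPart_eq_restr, coeff_restr]

theorem mem_support_leadingPart {P : MonomialPreorder n} {f : MvPolynomial (Fin n) k}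
    {b : Fin n →₀ ℕ} :
    b ∈ (leadingPart P f).support ↔ P.maxIn f.support b ∧ b ∈ f.support := by
  rw [leadingPart_eq_restr]; exact mem_support_restr

/-- The `P`-class component of `f` at the class of `a`. -/
noncomputable def compP (P : MonomialPreorder n) (f : MvPolynomial (Fin n) k)
    (a : Fin n →₀ ℕ) : MvPolynomial (Fin n) k :=
  restr f (fun b => P.sim a b)

theorem coeff_compP (P : MonomialPreorder n) (f : MvPolynomial (Fin n) k) (a b : Fin n →₀ ℕ) :
    coeff b (compP P f a) = if P.sim a b then coeff b f else 0 := coeff_restr f _ b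

theorem compP_add (P : MonomialPreorder n) (f g : MvPolynomial (Fin n) k) (a : Fin n →₀ ℕ) :
    compP P (f + g) a = compP P f a + compP P g a := restr_add f g _

theorem compP_zero (P : MonomialPreorder n) (a : Fin n →₀ ℕ) :
    compP P (0 : MvPolynomial (Fin n) k) a = 0 := by
  ext b; simp [coeff_compP]

end PolyAux
section KeyLemmas
attribute [local instance] Classical.propDecidable
variable {n : ℕ} {k : Type*} [Field k]

open MonomialPreorder

theorem maxIn_prod_iff {P P' Pstar : MonomialPreorder n}
    (hstar : ∀ a b, Pstar.lt a b ↔ P.lt a b ∨ ((¬ P.lt a b ∧ ¬ P.lt b a) ∧ P'.lt a b))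
    {f : MvPolynomial (Fin n) k} {b : Fin n →₀ ℕ} (hb : b ∈ f.support) :
    Pstar.maxIn f.support b ↔
      P.maxIn f.support b ∧ P'.maxIn (leadingPart P f).support b := by
  constructor
  · intro h
    have hP : P.maxIn f.support b := fun c hc hlt => h c hc ((hstar b c).mpr (Or.inl hlt))
    refine ⟨hP, fun c hc hlt' => ?_⟩
    obtain ⟨hcmax, hcs⟩ := mem_support_leadingPart.mp hc
    exact h c hcs ((hstar b c).mpr (Or.inr ⟨⟨hP c hcs, hcmax b hb⟩, hlt'⟩))
  · rintro ⟨hP, hP'⟩ c hc hlt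
    rcases (hstar b c).mp hlt with hlt | ⟨hsim, hlt'⟩
    · exact hP c hc hlt
    · have hcmax : P.maxIn f.support c := fun d hd hcd =>
        hP d hd (P.lt_of_sim_of_lt hsim hcd)
      exact hP' c (mem_support_leadingPart.mpr ⟨hcmax, hc⟩) hlt'

theorem leadingPart_prod {P P' Pstar : MonomialPreorder n}
    (hstar : ∀ a b, Pstar.lt a b ↔ P.lt a b ∨ ((¬ P.lt a b ∧ ¬ P.lt b a) ∧ P'.lt a b))
    (f : MvPolynomial (Fin n) k) :
    leadingPart Pstar f = leadingPart P' (leadingPart P f) := by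
  ext b
  simp only [coeff_leadingPart]
  rcases Classical.em (b ∈ f.support) with hb | hb
  · rw [if_congr (maxIn_prod_iff hstar hb) rfl rfl]
    by_cases h1 : P.maxIn f.support b <;> by_cases h2 : P'.maxIn (leadingPart P f).support b <;>
      simp [h1, h2]
  · have h0 : coeff b f = 0 := MvPolynomial.notMem_support_iff.mp hb
    simp [h0]

/-- Every monomial of `f` is either in the class of `a` or below it. -/
def LedBy (P : MonomialPreorder n) (f : MvPolynomial (Fin n) k) (a : Fin n →₀ ℕ) : Prop :=
  ∀ b ∈ f.support, P.sim a b ∨ P.lt b a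

theorem sim_iff_maxIn_of_ledBy {P : MonomialPreorder n} {f : MvPolynomial (Fin n) k}
    {a : Fin n →₀ ℕ} (hled : LedBy P f a) {c : Fin n →₀ ℕ} (hc : c ∈ f.support)
    (hsim : P.sim a c) {b : Fin n →₀ ℕ} (hb : b ∈ f.support) :
    P.sim a b ↔ P.maxIn f.support b := by
  constructor
  · intro hab
    intro d hd hbd
    rcases hled d hd with had | hda
    · exact hab.2 (P.lt_of_lt_of_sim hbd (P.sim_symm had))
    · exact hab.2 (P.trans hbd hda)
  · intro hmax
    rcases hled b hb with hab | hba
    · exact hab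
    · exact absurd (P.lt_of_lt_of_sim hba hsim) (hmax c hc)

theorem ledBy_of_leadingPart_sim {P : MonomialPreorder n} {h : MvPolynomial (Fin n) k}
    {a c : Fin n →₀ ℕ} (hc : c ∈ (leadingPart P h).support) (hac : P.sim a c) :
    LedBy P h a := by
  obtain ⟨hcmax, hcs⟩ := mem_support_leadingPart.mp hc
  intro b hb
  rcases Classical.em (P.maxIn h.support b) with hbm | hbm
  · exact Or.inl (P.sim_trans hac (P.sim_of_maxIn hcmax hbm hcs hb))
  · exact Or.inr (P.lt_of_lt_of_sim (P.lt_max_of_not_max hb hbm hcmax hcs)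
      (P.sim_symm hac))

theorem compP_eq_leadingPart {P : MonomialPreorder n} {h : MvPolynomial (Fin n) k}
    {a c : Fin n →₀ ℕ} (hc : c ∈ (leadingPart P h).support) (hac : P.sim a c) :
    compP P h a = leadingPart P h := by
  obtain ⟨hcmax, hcs⟩ := mem_support_leadingPart.mp hc
  rw [compP, leadingPart_eq_restr]
  exact restr_congr (fun b hb =>
    sim_iff_maxIn_of_ledBy (ledBy_of_leadingPart_sim hc hac) hcs hac hb)

theorem leadingPart_eq_compP_of_ledBy {P : MonomialPreorder n} {f : MvPolynomial (Fin n) k}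
    {a : Fin n →₀ ℕ} (hled : LedBy P f a) (hne : compP P f a ≠ 0) :
    leadingPart P f = compP P f a := by
  have : ∃ c, coeff c (compP P f a) ≠ 0 := by
    by_contra hc; push_neg at hc
    exact hne (MvPolynomial.eq_zero_iff.mpr hc)
  obtain ⟨c, hc⟩ := this
  rw [coeff_compP] at hc
  have hac : P.sim a c := by by_contra h; rw [if_neg h] at hc; exact hc rfl
  have hcs : c ∈ f.support := by
    rw [if_pos hac] at hc; exact MvPolynomial.mem_support_iff.mpr hc
  rw [compP, leadingPart_eq_restr]
  exact restr_congr (fun b hb => (sim_iff_maxIn_of_ledBy hled hcs hac hb).symm)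

theorem leadingPart_add_of_sim {P : MonomialPreorder n} {h₁ h₂ : MvPolynomial (Fin n) k}
    {a c₁ c₂ : Fin n →₀ ℕ}
    (hc₁ : c₁ ∈ (leadingPart P h₁).support) (hac₁ : P.sim a c₁)
    (hc₂ : c₂ ∈ (leadingPart P h₂).support) (hac₂ : P.sim a c₂)
    (hne : leadingPart P h₁ + leadingPart P h₂ ≠ 0) :
    leadingPart P (h₁ + h₂) = leadingPart P h₁ + leadingPart P h₂ := by
  have e₁ := compP_eq_leadingPart hc₁ hac₁
  have e₂ := compP_eq_leadingPart hc₂ hac₂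
  have hcomp : compP P (h₁ + h₂) a = leadingPart P h₁ + leadingPart P h₂ := by
    rw [compP_add, e₁, e₂]
  have hled : LedBy P (h₁ + h₂) a := by
    intro b hb
    have hb' := MvPolynomial.support_add hb
    rw [Finset.mem_union] at hb'
    rcases hb' with hb' | hb'
    · exact ledBy_of_leadingPart_sim hc₁ hac₁ b hb'
    · exact ledBy_of_leadingPart_sim hc₂ hac₂ b hb'
  rw [leadingPart_eq_compP_of_ledBy hled (hcomp ▸ hne), hcomp]

end KeyLemmas
section TermMul
attribute [local instance] Classical.propDecidable
variable {n : ℕ} {k : Type*} [Field k]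

open MonomialPreorder

theorem mem_support_termMul {m : Fin n →₀ ℕ} {c : k} (hc : c ≠ 0)
    {f : MvPolynomial (Fin n) k} {d : Fin n →₀ ℕ} :
    d ∈ (monomial m c * f).support ↔ ∃ b ∈ f.support, m + b = d := by
  constructor
  · intro hd
    have h := MvPolynomial.mem_support_iff.mp hd
    rw [MvPolynomial.coeff_monomial_mul'] at h
    by_cases hle : m ≤ d
    · rw [if_pos hle] at h
      refine ⟨d - m, ?_, add_tsub_cancel_of_le hle⟩
      rw [MvPolynomial.mem_support_iff]
      exact fun h0 => h (by rw [h0, mul_zero])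
    · rw [if_neg hle] at h; exact absurd rfl h
  · rintro ⟨b, hb, rfl⟩
    rw [MvPolynomial.mem_support_iff, MvPolynomial.coeff_monomial_mul]
    exact mul_ne_zero hc (MvPolynomial.mem_support_iff.mp hb)

theorem coeff_not_add {m : Fin n →₀ ℕ} {c : k} {f : MvPolynomial (Fin n) k}
    {d : Fin n →₀ ℕ} (hd : ¬ ∃ b, m + b = d) :
    coeff d (monomial m c * f) = 0 := by
  rw [MvPolynomial.coeff_monomial_mul']
  rcases Classical.em (m ≤ d) with hle | hle
  · exact absurd ⟨d - m, add_tsub_cancel_of_le hle⟩ hd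
  · exact if_neg hle

theorem maxIn_termMul_iff {P : MonomialPreorder n} {m : Fin n →₀ ℕ} {c : k} (hc : c ≠ 0)
    {f : MvPolynomial (Fin n) k} (b : Fin n →₀ ℕ) :
    P.maxIn (monomial m c * f).support (m + b) ↔ P.maxIn f.support b := by
  constructor
  · intro h b' hb' hlt
    refine h (m + b') (mem_support_termMul hc |>.mpr ⟨b', hb', rfl⟩) ?_
    have := P.compat m hlt
    rwa [add_comm b m, add_comm b' m] at this
  · intro h d' hd' hlt
    obtain ⟨b', hb', rfl⟩ := (mem_support_termMul hc).mp hd'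
    rw [add_comm m b, add_comm m b'] at hlt
    exact h b' hb' (P.cancel m hlt)

theorem leadingPart_termMul (P : MonomialPreorder n) (m : Fin n →₀ ℕ) {c : k} (hc : c ≠ 0)
    (f : MvPolynomial (Fin n) k) :
    leadingPart P (monomial m c * f) = monomial m c * leadingPart P f := by
  ext d
  rcases Classical.em (∃ b, m + b = d) with ⟨b, rfl⟩ | hd
  · rw [coeff_leadingPart, MvPolynomial.coeff_monomial_mul, MvPolynomial.coeff_monomial_mul,
      coeff_leadingPart, if_congr (maxIn_termMul_iff hc b) rfl rfl]
    split_ifs with h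
    · rfl
    · rw [mul_zero]
  · rw [coeff_leadingPart, coeff_not_add hd, coeff_not_add (c := c)
      (f := leadingPart P f) hd]
    split_ifs <;> rfl

theorem compP_termMul (P : MonomialPreorder n) {m : Fin n →₀ ℕ} {c : k}
    (f : MvPolynomial (Fin n) k) {a b₀ : Fin n →₀ ℕ} (hsim : P.sim a (m + b₀)) :
    compP P (monomial m c * f) a = monomial m c * compP P f b₀ := by
  ext d
  rcases Classical.em (∃ b, m + b = d) with ⟨b, rfl⟩ | hd
  · rw [coeff_compP, MvPolynomial.coeff_monomial_mul, MvPolynomial.coeff_monomial_mul,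
      coeff_compP]
    have hiff : P.sim a (m + b) ↔ P.sim b₀ b := by
      constructor
      · intro h
        have := P.sim_trans (P.sim_symm hsim) h
        rw [add_comm m b₀, add_comm m b] at this
        exact P.sim_cancel m this
      · intro h
        refine P.sim_trans hsim ?_
        have := P.sim_add m h
        rwa [add_comm b₀ m, add_comm b m] at this
    rw [if_congr hiff rfl rfl]
    split_ifs with h
    · rfl
    · rw [mul_zero]
  · rw [coeff_compP, coeff_not_add hd, coeff_not_add (c := c) (f := compP P f b₀) hd]
    split_ifs <;> rfl

theorem compP_termMul_zero (P : MonomialPreorder n) {m : Fin n →₀ ℕ} {c : k}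
    (f : MvPolynomial (Fin n) k) {a : Fin n →₀ ℕ} (hsim : ∀ b, ¬ P.sim a (m + b)) :
    compP P (monomial m c * f) a = 0 := by
  ext d
  rw [coeff_compP, coeff_zero]
  rcases Classical.em (∃ b, m + b = d) with ⟨b, rfl⟩ | hd
  · rw [if_neg (hsim b)]
  · rw [coeff_not_add hd]; split_ifs <;> rfl

end TermMul
section MainLemmas
attribute [local instance] Classical.propDecidable
variable {n : ℕ} {k : Type*} [Field k]

open MonomialPreorder

theorem restr_eq_self {f : MvPolynomial (Fin n) k} {p : (Fin n →₀ ℕ) → Prop}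
    (h : ∀ b ∈ f.support, p b) : restr f p = f := by
  ext b
  rw [coeff_restr]
  rcases Classical.em (b ∈ f.support) with hb | hb
  · rw [if_pos (h b hb)]
  · rw [MvPolynomial.notMem_support_iff.mp hb]; split_ifs <;> rfl

/-- The "every P-class component is a leading part of an element of J" predicate. -/
def Pred (P : MonomialPreorder n) (J : Ideal (MvPolynomial (Fin n) k))
    (q : MvPolynomial (Fin n) k) : Prop :=
  ∀ a, compP P q a = 0 ∨ ∃ h ∈ J, leadingPart P h = compP P q a

theorem pred_zero (P : MonomialPreorder n) (J : Ideal (MvPolynomial (Fin n) k)) :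
    Pred P J 0 := fun a => Or.inl (compP_zero P a)

theorem pred_add {P : MonomialPreorder n} {J : Ideal (MvPolynomial (Fin n) k)}
    {x y : MvPolynomial (Fin n) k} (hx : Pred P J x) (hy : Pred P J y) :
    Pred P J (x + y) := by
  intro a
  rw [compP_add]
  rcases Classical.em (compP P x a = 0) with h0x | h0x
  · rcases Classical.em (compP P y a = 0) with h0y | h0y
    · exact Or.inl (by rw [h0x, h0y, add_zero])
    · rcases hy a with h | ⟨h₂, hJ₂, e₂⟩
      · exact absurd h h0y
      · exact Or.inr ⟨h₂, hJ₂, by rw [h0x, zero_add]; exact e₂⟩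
  · rcases hx a with h | ⟨h₁, hJ₁, e₁⟩
    · exact absurd h h0x
    rcases Classical.em (compP P y a = 0) with h0y | h0y
    · exact Or.inr ⟨h₁, hJ₁, by rw [h0y, add_zero]; exact e₁⟩
    rcases hy a with h | ⟨h₂, hJ₂, e₂⟩
    · exact absurd h h0y
    rcases Classical.em (compP P x a + compP P y a = 0) with hsum | hsum
    · exact Or.inl hsum
    · -- both nonzero, use leadingPart_add_of_sim
      have hc₁ : ∃ c₁, c₁ ∈ (leadingPart P h₁).support := by
        rw [e₁]
        obtain ⟨c, hc⟩ := Finset.nonempty_iff_ne_empty.mpr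
          (fun he => h0x (MvPolynomial.support_eq_empty.mp he))
        exact ⟨c, hc⟩
      obtain ⟨c₁, hc₁⟩ := hc₁
      rw [e₁] at hc₁
      have hac₁ : P.sim a c₁ := (mem_support_restr.mp hc₁).1
      rw [← e₁] at hc₁
      have hc₂' : ∃ c₂, c₂ ∈ (leadingPart P h₂).support := by
        rw [e₂]
        obtain ⟨c, hc⟩ := Finset.nonempty_iff_ne_empty.mpr
          (fun he => h0y (MvPolynomial.support_eq_empty.mp he))
        exact ⟨c, hc⟩
      obtain ⟨c₂, hc₂⟩ := hc₂'
      rw [e₂] at hc₂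
      have hac₂ : P.sim a c₂ := (mem_support_restr.mp hc₂).1
      rw [← e₂] at hc₂
      have hne : leadingPart P h₁ + leadingPart P h₂ ≠ 0 := by rw [e₁, e₂]; exact hsum
      refine Or.inr ⟨h₁ + h₂, J.add_mem hJ₁ hJ₂, ?_⟩
      rw [leadingPart_add_of_sim hc₁ hac₁ hc₂ hac₂ hne, e₁, e₂]

theorem pred_term_mul {P : MonomialPreorder n} {J : Ideal (MvPolynomial (Fin n) k)}
    {q : MvPolynomial (Fin n) k} (hq : Pred P J q) (m : Fin n →₀ ℕ) (c : k) :
    Pred P J (monomial m c * q) := by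
  rcases Classical.em (c = 0) with rfl | hc
  · rw [monomial_zero, zero_mul]; exact pred_zero P J
  intro a
  rcases Classical.em (∃ b₀, P.sim a (m + b₀)) with ⟨b₀, hb₀⟩ | hno
  · rw [compP_termMul P q hb₀]
    rcases hq b₀ with h0 | ⟨h, hJ, e⟩
    · exact Or.inl (by rw [h0, mul_zero])
    · exact Or.inr ⟨monomial m c * h, J.mul_mem_left _ hJ,
        by rw [leadingPart_termMul P m hc, e]⟩
  · push_neg at hno
    exact Or.inl (compP_termMul_zero P q hno)

theorem pred_mul {P : MonomialPreorder n} {J : Ideal (MvPolynomial (Fin n) k)}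
    {q : MvPolynomial (Fin n) k} (hq : Pred P J q) (x : MvPolynomial (Fin n) k) :
    Pred P J (x * q) := by
  induction x using MvPolynomial.induction_on' with
  | monomial m c => exact pred_term_mul hq m c
  | add p₁ p₂ hp₁ hp₂ => rw [add_mul]; exact pred_add hp₁ hp₂

theorem pred_leadingPart {P : MonomialPreorder n} {J : Ideal (MvPolynomial (Fin n) k)}
    {h : MvPolynomial (Fin n) k} (hJ : h ∈ J) : Pred P J (leadingPart P h) := by
  intro a
  rcases Classical.em (compP P (leadingPart P h) a = 0) with h0 | h0
  · exact Or.inl h0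
  · obtain ⟨c, hc⟩ := Finset.nonempty_iff_ne_empty.mpr
      (fun he => h0 (MvPolynomial.support_eq_empty.mp he))
    obtain ⟨hac, hcs⟩ := mem_support_restr.mp hc
    refine Or.inr ⟨h, hJ, ?_⟩
    rw [compP, restr_eq_self]
    intro b hb
    obtain ⟨hbmax, hbs⟩ := mem_support_leadingPart.mp hb
    obtain ⟨hcmax, hcs'⟩ := mem_support_leadingPart.mp hcs
    exact P.sim_trans hac (P.sim_of_maxIn hcmax hbmax hcs' hbs)

theorem pred_of_mem_span {P : MonomialPreorder n} {J : Ideal (MvPolynomial (Fin n) k)}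
    {q : MvPolynomial (Fin n) k}
    (hq : q ∈ Ideal.span ((fun h => leadingPart P h) '' (J : Set (MvPolynomial (Fin n) k)))) :
    Pred P J q := by
  refine Submodule.span_induction ?_ ?_ ?_ ?_ hq
  · rintro x ⟨h, hJ, rfl⟩; exact pred_leadingPart hJ
  · exact pred_zero P J
  · intro x y _ _ hx hy; exact pred_add hx hy
  · intro r x _ hx; rw [smul_eq_mul]; exact pred_mul hx r

end MainLemmas
section Assembly
attribute [local instance] Classical.propDecidable
variable {n : ℕ} {k : Type*} [Field k]

open MonomialPreorder

/-- If all class-components of `g` lie in an ideal `T`, then so does `g`. -/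
theorem mem_of_comps_mem (P : MonomialPreorder n) (T : Ideal (MvPolynomial (Fin n) k)) :
    ∀ (N : ℕ) (g : MvPolynomial (Fin n) k), g.support.card ≤ N →
      (∀ a ∈ g.support, compP P g a ∈ T) → g ∈ T := by
  intro N
  induction N with
  | zero =>
    intro g hg _
    rw [MvPolynomial.support_eq_empty.mp (Finset.card_eq_zero.mp (Nat.le_zero.mp hg))]
    exact T.zero_mem
  | succ N ih =>
    intro g hg hcomp
    rcases Classical.em (g.support = ∅) with he | he
    · rw [MvPolynomial.support_eq_empty.mp he]; exact T.zero_mem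
    obtain ⟨a, ha⟩ := Finset.nonempty_iff_ne_empty.mpr he
    set g' := g - compP P g a with hg'
    have hcoe : ∀ b, coeff b g' = if P.sim a b then 0 else coeff b g := by
      intro b
      rw [hg', MvPolynomial.coeff_sub, coeff_compP]
      split_ifs <;> ring
    have hsub : g'.support ⊆ g.support.erase a := by
      intro b hb
      have hbne := MvPolynomial.mem_support_iff.mp hb
      rw [hcoe b] at hbne
      rcases Classical.em (P.sim a b) with hs | hs
      · rw [if_pos hs] at hbne; exact absurd rfl hbne
      · rw [if_neg hs] at hbne
        refine Finset.mem_erase.mpr ⟨fun hba => hs (hba ▸ P.sim_refl a), ?_⟩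
        exact MvPolynomial.mem_support_iff.mpr hbne
    have hcard : g'.support.card ≤ N := by
      have h1 := Finset.card_le_card hsub
      have h2 := Finset.card_erase_of_mem ha
      omega
    have hcomp' : ∀ b ∈ g'.support, compP P g' b ∈ T := by
      intro b hb
      have hbne := MvPolynomial.mem_support_iff.mp hb
      have hnab : ¬ P.sim a b := by
        intro hs; rw [hcoe b, if_pos hs] at hbne; exact hbne rfl
      have hbg : b ∈ g.support := Finset.mem_of_mem_erase (hsub hb)
      have : compP P g' b = compP P g b := by
        ext d
        rw [coeff_compP, coeff_compP]
        rcases Classical.em (P.sim b d) with hbd | hbd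
        · rw [if_pos hbd, if_pos hbd, hcoe d, if_neg
            (fun had => hnab (P.sim_trans had (P.sim_symm hbd)))]
        · rw [if_neg hbd, if_neg hbd]
      rw [this]
      exact hcomp b hbg
    have : g = compP P g a + g' := by rw [hg']; ring
    rw [this]
    exact T.add_mem (hcomp a ha) (ih g' hcard hcomp')

/-- Components of the `P'`-leading part are `P'`-leading parts of components. -/
theorem compP_leadingPart_comm (P P' : MonomialPreorder n) {q : MvPolynomial (Fin n) k}
    {a : Fin n →₀ ℕ} (ha : a ∈ (leadingPart P' q).support) :
    compP P (leadingPart P' q) a = leadingPart P' (compP P q a) := by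
  obtain ⟨hamax, haq⟩ := mem_support_leadingPart.mp ha
  ext b
  rw [coeff_compP, coeff_leadingPart, coeff_leadingPart, coeff_compP]
  rcases Classical.em (P.sim a b) with hab | hab
  · rcases Classical.em (coeff b q = 0) with h0 | h0
    · rw [h0]; split_ifs <;> rfl
    have hbq : b ∈ q.support := MvPolynomial.mem_support_iff.mpr h0
    have hiff : P'.maxIn q.support b ↔ P'.maxIn (compP P q a).support b := by
      constructor
      · intro h c hc hlt
        exact h c (mem_support_restr.mp hc).2 hlt
      · intro h c hc hlt'
        have hamem : a ∈ (compP P q a).support :=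
          mem_support_restr.mpr ⟨P.sim_refl a, haq⟩
        have hba : ¬ P'.lt b a := h a hamem
        have hab' : ¬ P'.lt a b := hamax b hbq
        exact hamax c hc (P'.lt_of_sim_of_lt ⟨hab', hba⟩ hlt')
    rw [if_pos hab, if_congr hiff.symm rfl rfl]
    split_ifs <;> simp_all
  · rw [if_neg hab, if_neg hab]
    split_ifs <;> rfl

/-- Main lemma: the `P'`-leading part of an element of the `P`-leading ideal of `J`
lies in the span of the `Pstar = P * P'` leading parts. -/
theorem main_reverse {P P' : MonomialPreorder n} {J : Ideal (MvPolynomial (Fin n) k)}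
    {q : MvPolynomial (Fin n) k}
    (hq : q ∈ Ideal.span ((fun h => leadingPart P h) '' (J : Set (MvPolynomial (Fin n) k)))) :
    leadingPart P' q ∈ Ideal.span
      ((fun h => leadingPart P' (leadingPart P h)) '' (J : Set (MvPolynomial (Fin n) k))) := by
  have hpred := pred_of_mem_span hq
  apply mem_of_comps_mem P _ (leadingPart P' q).support.card _ le_rfl
  intro a ha
  rw [compP_leadingPart_comm P P' ha]
  have haq : a ∈ q.support := (mem_support_leadingPart.mp ha).2
  rcases hpred a with h0 | ⟨h, hJ, e⟩
  · exfalso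
    have : coeff a (compP P q a) ≠ 0 := by
      rw [coeff_compP, if_pos (P.sim_refl a)]
      exact MvPolynomial.mem_support_iff.mp haq
    exact this (by rw [h0, coeff_zero])
  · rw [← e]
    exact Ideal.subset_span ⟨h, hJ, rfl⟩

end Assembly
section Final
attribute [local instance] Classical.propDecidable
variable {n : ℕ} {k : Type*} [Field k]

open MonomialPreorder

theorem coeff_one' (b : Fin n →₀ ℕ) (hb : b ≠ 0) :
    coeff b (1 : MvPolynomial (Fin n) k) = 0 := by
  classical
  rw [MvPolynomial.coeff_one]
  exact if_neg (fun h => hb h.symm)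

theorem leadingPart_one (P : MonomialPreorder n) :
    leadingPart P (1 : MvPolynomial (Fin n) k) = 1 := by
  have hsupp : (1 : MvPolynomial (Fin n) k).support ⊆ {0} := by
    intro d hd
    by_contra hd0
    exact MvPolynomial.mem_support_iff.mp hd
      (coeff_one' d (fun h => hd0 (by rw [h]; exact Finset.mem_singleton_self 0)))
  ext b
  rw [coeff_leadingPart]
  rcases Classical.em (b = 0) with rfl | hb
  · rw [if_pos]
    intro c hc
    rw [Finset.mem_singleton.mp (hsupp hc)]
    exact P.irrefl 0
  · rw [coeff_one' b hb]
    split_ifs <;> rfl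

theorem leadingIdealWrt_ideal (P Q : MonomialPreorder n) (I : Ideal (Loc k P)) :
    leadingIdealWrt P Q (I : Set (Loc k P)) =
      Ideal.span ((fun p => leadingPart Q p) ''
        ((Ideal.comap (algebraMap (MvPolynomial (Fin n) k) (Loc k P)) I :
          Ideal (MvPolynomial (Fin n) k)) : Set (MvPolynomial (Fin n) k))) := by
  rw [leadingIdealWrt]
  congr 1
  ext q
  constructor
  · rintro ⟨f, hf, u, p, hu, hp, rfl⟩
    refine ⟨p, ?_, rfl⟩
    show algebraMap (MvPolynomial (Fin n) k) (Loc k P) p ∈ I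
    rw [hp]
    exact I.mul_mem_left _ hf
  · rintro ⟨p, hp, rfl⟩
    exact ⟨algebraMap (MvPolynomial (Fin n) k) (Loc k P) p, hp, 1, p, leadingPart_one P,
      by rw [map_one, one_mul], rfl⟩

end Final

/-- If <* is the product of < with <', then L_{<*}(G) ⊆ L_{<'}(L_<(G))
for every subset G of k[X]_<, with equality when G is an ideal. -/
theorem leadingIdeal_product_refinement (n : ℕ) (k : Type*) [Field k]
    (P P' Pstar : MonomialPreorder n)
    (hstar : ∀ a b, Pstar.lt a b ↔ P.lt a b ∨ ((¬ P.lt a b ∧ ¬ P.lt b a) ∧ P'.lt a b)) :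
    (∀ G : Set (Loc k P), leadingIdealWrt P Pstar G ≤
      leadingIdealPoly P' ((leadingIdeal P G : Ideal (MvPolynomial (Fin n) k)) :
        Set (MvPolynomial (Fin n) k))) ∧
    (∀ I : Ideal (Loc k P), leadingIdealWrt P Pstar (I : Set (Loc k P)) =
      leadingIdealPoly P' ((leadingIdeal P (I : Set (Loc k P)) : Ideal (MvPolynomial (Fin n) k)) :
        Set (MvPolynomial (Fin n) k))) := by
  have part1 : ∀ G : Set (Loc k P), leadingIdealWrt P Pstar G ≤
      leadingIdealPoly P' ((leadingIdeal P G : Ideal (MvPolynomial (Fin n) k)) :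
        Set (MvPolynomial (Fin n) k)) := by
    intro G
    rw [leadingIdealWrt, Ideal.span_le]
    rintro q ⟨f, hf, u, p, hu, hp, rfl⟩
    rw [leadingPart_prod hstar p]
    refine Ideal.subset_span ⟨leadingPart P p, ?_, rfl⟩
    exact Ideal.subset_span ⟨f, hf, u, p, hu, hp, rfl⟩
  refine ⟨part1, fun I => le_antisymm (part1 (I : Set (Loc k P))) ?_⟩
  set J : Ideal (MvPolynomial (Fin n) k) :=
    Ideal.comap (algebraMap (MvPolynomial (Fin n) k) (Loc k P)) I with hJ
  rw [leadingIdealPoly, Ideal.span_le]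
  rintro g ⟨q, hq, rfl⟩
  have hA : leadingIdeal P (I : Set (Loc k P)) =
      Ideal.span ((fun h => leadingPart P h) '' (J : Set (MvPolynomial (Fin n) k))) := by
    rw [leadingIdeal, leadingIdealWrt_ideal]
  have hq' : q ∈ Ideal.span ((fun h => leadingPart P h) ''
      (J : Set (MvPolynomial (Fin n) k))) := by
    rw [← hA]; exact hq
  have hT : leadingIdealWrt P Pstar (I : Set (Loc k P)) =
      Ideal.span ((fun h => leadingPart Pstar h) '' (J : Set (MvPolynomial (Fin n) k))) := by
    rw [leadingIdealWrt_ideal]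
  rw [hT]
  have himg : (fun h => leadingPart Pstar h) '' (J : Set (MvPolynomial (Fin n) k)) =
      (fun h => leadingPart P' (leadingPart P h)) '' (J : Set (MvPolynomial (Fin n) k)) :=
    Set.image_congr (fun h _ => leadingPart_prod hstar h)
  rw [himg]
  exact main_reverse hq'
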